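/- arXiv:1511.06263 — 9 statements merged into one kernel-verified Lean document; each statement's English description precedes it below -/
import Mathlib

section
/- Let P and Q be orthogonal projectors on R^d and let x be a unit eigenvector of P+Q with eigenvalue λ ∈ (0,1) ∪ (1,2). Then (P+Q)((P−Q)x) = (2−λ)(P−Q)x, i.e. (P−Q)x is an eigenvector of P+Q with eigenvalue 2−λ. -/
open RealInnerProductSpace

theorem stmt_4 (d : ℕ) (P Q : EuclideanSpace ℝ (Fin d) →ₗ[ℝ] EuclideanSpace ℝ (Fin d))
    (hPsymm : ∀ x y, ⟪P x, y⟫ = ⟪x, P y⟫) (hPidem : P ∘ₗ P = P)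
    (hQsymm : ∀ x y, ⟪Q x, y⟫ = ⟪x, Q y⟫) (hQidem : Q ∘ₗ Q = Q)
    (x : EuclideanSpace ℝ (Fin d)) (hx : ‖x‖ = 1)
    (lam : ℝ) (hlam0 : 0 < lam) (hlam2 : lam < 2) (hlam1 : lam ≠ 1)
    (h : (P + Q) x = lam • x) :
    (P + Q) ((P - Q) x) = (2 - lam) • ((P - Q) x) := by
  have hPP : P (P x) = P x := by
    rw [← LinearMap.comp_apply, hPidem]
  have hQQ : Q (Q x) = Q x := by
    rw [← LinearMap.comp_apply, hQidem]
  have h2 : P (P x + Q x) - Q (P x + Q x) = lam • P x - lam • Q x := by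
    have := congrArg (fun v => P v - Q v) h
    simpa [map_smul] using this
  simp only [map_add, map_sub, hPP, hQQ, LinearMap.add_apply, LinearMap.sub_apply] at h2 ⊢
  have e2 : P (Q x) - Q (P x) = lam • P x - lam • Q x - P x + Q x := by
    linear_combination (norm := module) h2
  linear_combination (norm := module) -e2
end

section
/- Let P and Q be orthogonal projectors on R^d and let x be a unit eigenvector of P+Q with eigenvalue λ ∈ (0,1) ∪ (1,2). Then ‖Px‖ = ‖Qx‖ and 0 < ‖Px‖ < 1, and in particular x − Px ≠ 0. -/
open RealInnerProductSpace

theorem stmt_5 (d : ℕ) (P Q : EuclideanSpace ℝ (Fin d) →ₗ[ℝ] EuclideanSpace ℝ (Fin d))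
    (hPsymm : ∀ x y, ⟪P x, y⟫ = ⟪x, P y⟫) (hPidem : P ∘ₗ P = P)
    (hQsymm : ∀ x y, ⟪Q x, y⟫ = ⟪x, Q y⟫) (hQidem : Q ∘ₗ Q = Q)
    (x : EuclideanSpace ℝ (Fin d)) (hx : ‖x‖ = 1)
    (lam : ℝ) (hlam0 : 0 < lam) (hlam2 : lam < 2) (hlam1 : lam ≠ 1)
    (h : (P + Q) x = lam • x) :
    ‖P x‖ = ‖Q x‖ ∧ 0 < ‖P x‖ ∧ ‖P x‖ < 1 ∧ x - P x ≠ 0 := by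
  have hPP : P (P x) = P x := LinearMap.congr_fun hPidem x
  have hQQ : Q (Q x) = Q x := LinearMap.congr_fun hQidem x
  have ha : ‖P x‖ ^ 2 = ⟪x, P x⟫ := by
    rw [← real_inner_self_eq_norm_sq, hPsymm x (P x), hPP]
  have hb : ‖Q x‖ ^ 2 = ⟪x, Q x⟫ := by
    rw [← real_inner_self_eq_norm_sq, hQsymm x (Q x), hQQ]
  have hsum : P x + Q x = lam • x := by simpa [LinearMap.add_apply] using h
  have hQx : Q x = lam • x - P x := eq_sub_of_add_eq' hsum
  have hPx : P x = lam • x - Q x := eq_sub_of_add_eq hsum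
  have hac : ⟪P x, x⟫ = ‖P x‖ ^ 2 := by rw [real_inner_comm, ← ha]
  have hbc : ⟪Q x, x⟫ = ‖Q x‖ ^ 2 := by rw [real_inner_comm, ← hb]
  have h1 : ⟪P x, Q x⟫ = (lam - 1) * ‖P x‖ ^ 2 := by
    rw [hQx, inner_sub_right, real_inner_smul_right, real_inner_self_eq_norm_sq,
      real_inner_comm, ← ha]
    ring
  have h2 : ⟪Q x, P x⟫ = (lam - 1) * ‖Q x‖ ^ 2 := by
    rw [hPx, inner_sub_right, real_inner_smul_right, real_inner_self_eq_norm_sq,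
      real_inner_comm, ← hb]
    ring
  have hkey : (lam - 1) * ‖P x‖ ^ 2 = (lam - 1) * ‖Q x‖ ^ 2 := by
    rw [← h1, ← h2, real_inner_comm]
  have hsq : ‖P x‖ ^ 2 = ‖Q x‖ ^ 2 :=
    mul_left_cancel₀ (sub_ne_zero.mpr hlam1) hkey
  have hnorm : ‖P x‖ = ‖Q x‖ :=
    (sq_eq_sq₀ (norm_nonneg _) (norm_nonneg _)).mp hsq
  have htot : ‖P x‖ ^ 2 + ‖Q x‖ ^ 2 = lam := by
    have h3 : ⟪P x + Q x, x⟫ = lam * ‖x‖ ^ 2 := by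
      rw [hsum, real_inner_smul_left, real_inner_self_eq_norm_sq]
    rw [inner_add_left, hac, hbc, hx] at h3
    simpa using h3
  have hval : ‖P x‖ ^ 2 = lam / 2 := by rw [hsq] at htot; linarith
  have hpos : 0 < ‖P x‖ := by nlinarith [norm_nonneg (P x)]
  have hlt : ‖P x‖ < 1 := by nlinarith [norm_nonneg (P x)]
  refine ⟨hnorm, hpos, hlt, ?_⟩
  intro h0
  have hxP : x = P x := by
    have := sub_eq_zero.mp h0
    exact this
  rw [← hxP, hx] at hlt
  exact lt_irrefl 1 hlt
end

section
/- Let P and Q be orthogonal projectors on R^d and let x, y be two orthonormal eigenvectors of P+Q with the same eigenvalue λ ∈ (0,1) ∪ (1,2). Then ⟨(P−Q)x, (P−Q)y⟩ = 0. -/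
open RealInnerProductSpace

theorem stmt_8 (d : ℕ) (P Q : EuclideanSpace ℝ (Fin d) →ₗ[ℝ] EuclideanSpace ℝ (Fin d))
    (hPsymm : ∀ x y, ⟪P x, y⟫ = ⟪x, P y⟫) (hPidem : P ∘ₗ P = P)
    (hQsymm : ∀ x y, ⟪Q x, y⟫ = ⟪x, Q y⟫) (hQidem : Q ∘ₗ Q = Q)
    (x y : EuclideanSpace ℝ (Fin d)) (hx : ‖x‖ = 1) (hy : ‖y‖ = 1) (hxy : ⟪x, y⟫ = 0)
    (lam : ℝ) (hlam0 : 0 < lam) (hlam2 : lam < 2) (hlam1 : lam ≠ 1)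
    (hex : (P + Q) x = lam • x) (hey : (P + Q) y = lam • y) :
    ⟪(P - Q) x, (P - Q) y⟫ = 0 := by
  have hP : ∀ z, P (P z) = P z := fun z => DFunLike.congr_fun hPidem z
  have hQ : ∀ z, Q (Q z) = Q z := fun z => DFunLike.congr_fun hQidem z
  have h2 : (P + Q) ((P + Q) y) = (lam * lam) • y := by
    rw [hey, map_smul, hey, smul_smul]
  have hey' : P y + Q y = lam • y := hey
  have h2' : P (P y) + Q (P y) + (P (Q y) + Q (Q y)) = (lam * lam) • y := by
    simpa [LinearMap.add_apply, map_add] using h2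
  rw [hP, hQ] at h2'
  have key : (P - Q) ((P - Q) y) = (2 * lam) • y - (lam * lam) • y := by
    have : P (P y) - Q (P y) - (P (Q y) - Q (Q y))
        = (2 * lam) • y - (lam * lam) • y := by
      rw [hP, hQ]
      linear_combination (norm := module) (2 : ℝ) • hey' - h2'
    simpa [LinearMap.sub_apply, map_sub] using this
  have hsym : ∀ z, ⟪(P - Q) x, z⟫ = ⟪x, (P - Q) z⟫ := fun z => by
    simp [LinearMap.sub_apply, inner_sub_left, inner_sub_right, hPsymm, hQsymm]
  rw [hsym, key, inner_sub_right, inner_smul_right, inner_smul_right, hxy]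
  ring
end

section
/- Let P and Q be orthogonal projectors on R^d of equal rank. Then the operator norm of P−Q equals the supremum of ‖(P−Q)θ‖ over unit vectors θ in the image of Q. -/
/-!
Write `P_U`, `P_W` for the orthogonal projections onto `U = range P` and `W = range Q`, and let `S`
be the supremum on the right, so that `‖θ - P_U θ‖ ≤ S ‖θ‖` for `θ ∈ W`. For every `x`, the vector
`(P_U - P_W) x` splits orthogonally into `P_U (x - P_W x) ∈ U` and `P_U (P_W x) - P_W x ∈ Uᗮ`. The
second piece has norm at most `S ‖P_W x‖`, so by Pythagoras it suffices to bound `P_U` by `S` on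
`Wᗮ`, and by duality this amounts to `‖η - P_W η‖ ≤ S ‖η‖` for `η ∈ U`: closeness of `W` to `U` has
to be symmetric. This is where the ranks enter. Either some nonzero `θ ∈ W` is orthogonal to `U`,
which forces `S ≥ 1` and makes the bound trivial; or `P_U` is injective on `W`, hence maps `W` onto
`U` since `dim U ≤ dim W`, and a Cauchy–Schwarz computation with `⟪P_W (P_U θ), θ⟫ = ‖P_U θ‖²`
transfers the bound from `θ` to `P_U θ`.
-/

open RealInnerProductSpace Module

namespace Submodule

variable {V : Type*} [NormedAddCommGroup V] [InnerProductSpace ℝ V] (U W : Submodule ℝ V)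

section

variable [U.HasOrthogonalProjection]

lemma norm_sub_starProjection_sq (x : V) :
    ‖x - U.starProjection x‖ ^ 2 = ‖x‖ ^ 2 - ‖U.starProjection x‖ ^ 2 := by
  rw [norm_sq_eq_add_norm_sq_starProjection x U, starProjection_orthogonal_val]
  ring

lemma real_inner_starProjection_self (x : V) :
    ⟪U.starProjection x, x⟫ = ‖U.starProjection x‖ ^ 2 := by
  rw [← real_inner_self_eq_norm_sq, ← inner_starProjection_left_eq_right,
    starProjection_eq_self_iff.mpr (starProjection_apply_mem U _)]

variable [W.HasOrthogonalProjection]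

lemma norm_sq_starProjection_sub_starProjection_apply (x : V) :
    ‖(U.starProjection - W.starProjection) x‖ ^ 2 =
      ‖U.starProjection (x - W.starProjection x)‖ ^ 2 +
        ‖W.starProjection x - U.starProjection (W.starProjection x)‖ ^ 2 := by
  have hsplit : (U.starProjection - W.starProjection) x =
      U.starProjection (x - W.starProjection x) -
        (W.starProjection x - U.starProjection (W.starProjection x)) := by
    simp only [sub_apply, map_sub]
    abel
  have horth : ⟪U.starProjection (x - W.starProjection x),
      W.starProjection x - U.starProjection (W.starProjection x)⟫ = 0 :=
    inner_right_of_mem_orthogonal (starProjection_apply_mem U _)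
      (sub_starProjection_mem_orthogonal _)
  rw [hsplit, sq, sq, sq, norm_sub_sq_eq_norm_sq_add_norm_sq_real horth]

lemma norm_starProjection_sub_starProjection_starProjection_le {S : ℝ}
    (hS : ∀ θ ∈ W, ‖θ - U.starProjection θ‖ ≤ S * ‖θ‖) {θ : V} (hθ : θ ∈ W) :
    ‖U.starProjection θ - W.starProjection (U.starProjection θ)‖ ≤ S * ‖U.starProjection θ‖ := by
  set η := U.starProjection θ
  rcases (norm_nonneg θ).eq_or_lt with hθ0 | hθpos
  · simp [η, norm_eq_zero.mp hθ0.symm]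
  have hS0 : 0 ≤ S := nonneg_of_mul_nonneg_left ((norm_nonneg _).trans (hS θ hθ)) hθpos
  have hcs : ‖η‖ ^ 2 ≤ ‖W.starProjection η‖ * ‖θ‖ := by
    calc ‖η‖ ^ 2 = ⟪W.starProjection η, θ⟫ := by
          rw [inner_starProjection_left_eq_right, starProjection_eq_self_iff.mpr hθ]
          exact (real_inner_starProjection_self U θ).symm
      _ ≤ _ := real_inner_le_norm _ _
  have key : (‖η - W.starProjection η‖ * ‖θ‖) ^ 2 ≤ (S * ‖η‖ * ‖θ‖) ^ 2 := by
    have hcs_sq := pow_le_pow_left₀ (sq_nonneg _) hcs 2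
    calc (‖η - W.starProjection η‖ * ‖θ‖) ^ 2
        = ‖η‖ ^ 2 * ‖θ‖ ^ 2 - (‖W.starProjection η‖ * ‖θ‖) ^ 2 := by
          rw [mul_pow, norm_sub_starProjection_sq]; ring
      _ ≤ ‖η‖ ^ 2 * ‖θ‖ ^ 2 - (‖η‖ ^ 2) ^ 2 := by linarith
      _ = ‖η‖ ^ 2 * ‖θ - η‖ ^ 2 := by rw [norm_sub_starProjection_sq]; ring
      _ ≤ ‖η‖ ^ 2 * (S * ‖θ‖) ^ 2 := by gcongr; exact hS θ hθ
      _ = (S * ‖η‖ * ‖θ‖) ^ 2 := by ring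
  have hmul := (pow_le_pow_iff_left₀ (by positivity) (by positivity) two_ne_zero).mp key
  exact le_of_mul_le_mul_right hmul hθpos

lemma norm_starProjection_le_of_mem_orthogonal {S : ℝ} (hS0 : 0 ≤ S)
    (hS : ∀ η ∈ U, ‖η - W.starProjection η‖ ≤ S * ‖η‖) {y : V} (hy : y ∈ Wᗮ) :
    ‖U.starProjection y‖ ≤ S * ‖y‖ := by
  set η := U.starProjection y
  have h : ‖η‖ * ‖η‖ ≤ S * ‖y‖ * ‖η‖ := by
    calc ‖η‖ * ‖η‖ = ⟪η - W.starProjection η, y⟫ := by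
          rw [inner_sub_left, inner_right_of_mem_orthogonal (starProjection_apply_mem W _) hy,
            sub_zero, ← sq]
          exact (real_inner_starProjection_self U y).symm
      _ ≤ ‖η - W.starProjection η‖ * ‖y‖ := real_inner_le_norm _ _
      _ ≤ S * ‖η‖ * ‖y‖ := by gcongr; exact hS η (starProjection_apply_mem U y)
      _ = S * ‖y‖ * ‖η‖ := by ring
  rcases (norm_nonneg η).eq_or_lt with hη0 | hηpos
  · rw [← hη0]; positivity
  · exact le_of_mul_le_mul_right h hηpos

end

lemma exists_mem_starProjection_eq [FiniteDimensional ℝ U] [FiniteDimensional ℝ W]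
    (hdim : finrank ℝ U ≤ finrank ℝ W) (hdisj : Disjoint W Uᗮ) {η : V} (hη : η ∈ U) :
    ∃ θ ∈ W, U.starProjection θ = η := by
  let f : W →ₗ[ℝ] U := (U.orthogonalProjectionOnto : V →ₗ[ℝ] U).comp W.subtype
  have hinj : Function.Injective f := by
    refine (injective_iff_map_eq_zero f).mpr fun θ hθ => ?_
    have hθU : (θ : V) ∈ Uᗮ := by
      rw [← starProjection_apply_eq_zero_iff, starProjection_apply]
      exact congrArg Subtype.val hθ
    exact Subtype.ext (disjoint_def.mp hdisj θ θ.2 hθU)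
  have hsurj : Function.Surjective f :=
    (LinearMap.injective_iff_surjective_of_finrank_eq_finrank
      ((LinearMap.finrank_le_finrank_of_injective hinj).antisymm hdim)).mp hinj
  obtain ⟨θ, hθ⟩ := hsurj ⟨η, hη⟩
  exact ⟨θ, θ.2, by rw [starProjection_apply]; exact congrArg Subtype.val hθ⟩

lemma norm_sub_starProjection_le_of_finrank_le [FiniteDimensional ℝ U] [FiniteDimensional ℝ W]
    (hdim : finrank ℝ U ≤ finrank ℝ W) {S : ℝ}
    (hS : ∀ θ ∈ W, ‖θ - U.starProjection θ‖ ≤ S * ‖θ‖) {η : V} (hη : η ∈ U) :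
    ‖η - W.starProjection η‖ ≤ S * ‖η‖ := by
  by_cases hdisj : Disjoint W Uᗮ
  · obtain ⟨θ, hθ, rfl⟩ := exists_mem_starProjection_eq U W hdim hdisj hη
    exact norm_starProjection_sub_starProjection_starProjection_le U W hS hθ
  · -- a nonzero `θ ∈ W ⊓ Uᗮ` has `θ - P_U θ = θ`, which forces `1 ≤ S`
    obtain ⟨θ, hθW, hθU, hθ0⟩ : ∃ θ ∈ W, θ ∈ Uᗮ ∧ θ ≠ 0 := by
      simpa [disjoint_def] using hdisj
    have hS1 : 1 ≤ S := by
      have h := hS θ hθW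
      rw [(starProjection_apply_eq_zero_iff U).mpr hθU, sub_zero] at h
      exact (le_mul_iff_one_le_left (norm_pos_iff.mpr hθ0)).mp h
    calc ‖η - W.starProjection η‖ = ‖Wᗮ.starProjection η‖ := by
          rw [starProjection_orthogonal_val]
      _ ≤ ‖η‖ := Wᗮ.norm_starProjection_apply_le η
      _ ≤ S * ‖η‖ := le_mul_of_one_le_left (norm_nonneg η) hS1

lemma norm_starProjection_sub_starProjection_le [FiniteDimensional ℝ U] [FiniteDimensional ℝ W]
    (hdim : finrank ℝ U ≤ finrank ℝ W) {S : ℝ} (hS0 : 0 ≤ S)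
    (hS : ∀ θ ∈ W, ‖θ - U.starProjection θ‖ ≤ S * ‖θ‖) :
    ‖U.starProjection - W.starProjection‖ ≤ S := by
  refine ContinuousLinearMap.opNorm_le_bound _ hS0 fun x => ?_
  have hker : ‖U.starProjection (x - W.starProjection x)‖ ≤ S * ‖x - W.starProjection x‖ :=
    norm_starProjection_le_of_mem_orthogonal U W hS0
      (fun η hη => norm_sub_starProjection_le_of_finrank_le U W hdim hS hη)
      (sub_starProjection_mem_orthogonal x)
  have hrange := hS _ (starProjection_apply_mem W x)
  have hsq : ‖(U.starProjection - W.starProjection) x‖ ^ 2 ≤ (S * ‖x‖) ^ 2 := by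
    calc _ = _ := norm_sq_starProjection_sub_starProjection_apply U W x
      _ ≤ (S * ‖x - W.starProjection x‖) ^ 2 + (S * ‖W.starProjection x‖) ^ 2 := by
          gcongr
      _ = (S * ‖x‖) ^ 2 := by
          rw [mul_pow, mul_pow, ← mul_add, norm_sub_starProjection_sq]
          ring
  exact (pow_le_pow_iff_left₀ (norm_nonneg _) (by positivity) two_ne_zero).mp hsq

lemma norm_starProjection_sub_starProjection_eq_sSup [FiniteDimensional ℝ U]
    [FiniteDimensional ℝ W] (hdim : finrank ℝ U ≤ finrank ℝ W) :
    ‖U.starProjection - W.starProjection‖ =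
      sSup ((fun θ => ‖(U.starProjection - W.starProjection) θ‖) '' {θ | θ ∈ W ∧ ‖θ‖ = 1}) := by
  set f := (U.starProjection - W.starProjection).comp W.subtypeL
  have hset : (fun θ => ‖(U.starProjection - W.starProjection) θ‖) '' {θ | θ ∈ W ∧ ‖θ‖ = 1} =
      (fun θ => ‖f θ‖) '' Metric.sphere 0 1 := by
    ext r
    constructor
    · rintro ⟨θ, ⟨hθ, hθ1⟩, rfl⟩
      exact ⟨⟨θ, hθ⟩, by simpa using hθ1, rfl⟩
    · rintro ⟨θ, hθ1, rfl⟩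
      exact ⟨θ, ⟨θ.2, by simpa using hθ1⟩, rfl⟩
  rw [hset, f.sSup_sphere_eq_norm]
  refine le_antisymm (norm_starProjection_sub_starProjection_le U W hdim (norm_nonneg f)
    fun θ hθ => ?_) ?_
  · calc ‖θ - U.starProjection θ‖ = ‖f ⟨θ, hθ⟩‖ := by
          simp [f, starProjection_eq_self_iff.mpr hθ, norm_sub_rev]
      _ ≤ ‖f‖ * ‖θ‖ := f.le_opNorm _
  · calc ‖f‖ ≤ ‖U.starProjection - W.starProjection‖ * ‖W.subtypeL‖ :=
          ContinuousLinearMap.opNorm_comp_le _ _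
      _ ≤ ‖U.starProjection - W.starProjection‖ :=
          mul_le_of_le_one_right (norm_nonneg _) (norm_subtypeL_le W)

end Submodule

lemma ContinuousLinearMap.exists_eq_starProjection_of_isSymmetric {V : Type*}
    [NormedAddCommGroup V] [InnerProductSpace ℝ V] [CompleteSpace V] {P : V →L[ℝ] V}
    (hsymm : (P : V →ₗ[ℝ] V).IsSymmetric) (hidem : P.comp P = P) :
    ∃ (K : Submodule ℝ V) (_ : K.HasOrthogonalProjection), P = K.starProjection :=
  isStarProjection_iff_eq_starProjection.mp
    (isStarProjection_iff_isSymmetricProjection.mpr ⟨congrArg toLinearMap hidem, hsymm⟩)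

theorem stmt_9 (d : ℕ) (P Q : EuclideanSpace ℝ (Fin d) →L[ℝ] EuclideanSpace ℝ (Fin d))
    (hPsymm : ∀ x y, ⟪P x, y⟫ = ⟪x, P y⟫) (hPidem : P.comp P = P)
    (hQsymm : ∀ x y, ⟪Q x, y⟫ = ⟪x, Q y⟫) (hQidem : Q.comp Q = Q)
    (hrank : Module.finrank ℝ (LinearMap.range (P : EuclideanSpace ℝ (Fin d) →ₗ[ℝ] EuclideanSpace ℝ (Fin d)))
        = Module.finrank ℝ (LinearMap.range (Q : EuclideanSpace ℝ (Fin d) →ₗ[ℝ] EuclideanSpace ℝ (Fin d)))) :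
    ‖P - Q‖ = sSup ((fun θ => ‖(P - Q) θ‖) ''
      {θ : EuclideanSpace ℝ (Fin d) | θ ∈ LinearMap.range (Q : EuclideanSpace ℝ (Fin d) →ₗ[ℝ] EuclideanSpace ℝ (Fin d)) ∧ ‖θ‖ = 1}) := by
  obtain ⟨U, _, rfl⟩ := ContinuousLinearMap.exists_eq_starProjection_of_isSymmetric hPsymm hPidem
  obtain ⟨W, _, rfl⟩ := ContinuousLinearMap.exists_eq_starProjection_of_isSymmetric hQsymm hQidem
  rw [Submodule.range_starProjection, Submodule.range_starProjection] at hrank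
  rw [Submodule.range_starProjection]
  exact U.norm_starProjection_sub_starProjection_eq_sSup W hrank.le
end

section
/- Let M and M' be symmetric d×d real matrices and let f : R → R be a Lipschitz function with constant 1/L. Then ‖f(M) − f(M')‖_F ≤ (1/L) ‖M − M'‖_F, where f is applied to each matrix via the spectral functional calculus. -/
open Matrix

lemma frob_conj {d : ℕ} (U V A : Matrix (Fin d) (Fin d) ℝ)
    (hU2 : Uᵀ * U = 1) (hV2 : Vᵀ * V = 1) :
    Matrix.trace ((U * A * Vᵀ)ᵀ * (U * A * Vᵀ)) = Matrix.trace (Aᵀ * A) := by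
  have h1 : (U * A * Vᵀ)ᵀ * (U * A * Vᵀ) = V * (Aᵀ * A) * Vᵀ := by
    have : (U * A * Vᵀ)ᵀ = V * Aᵀ * Uᵀ := by
      simp [Matrix.transpose_mul, Matrix.mul_assoc]
    rw [this]
    calc V * Aᵀ * Uᵀ * (U * A * Vᵀ) = V * Aᵀ * (Uᵀ * U) * A * Vᵀ := by
          simp [Matrix.mul_assoc]
      _ = V * (Aᵀ * A) * Vᵀ := by rw [hU2]; simp [Matrix.mul_assoc]
  rw [h1, Matrix.trace_mul_comm (V * (Aᵀ * A)) Vᵀ, ← Matrix.mul_assoc, hV2, Matrix.one_mul]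

lemma conj_diff {d : ℕ} (U V : Matrix (Fin d) (Fin d) ℝ)
    (hU1 : U * Uᵀ = 1) (hV1 : V * Vᵀ = 1) (c e : Fin d → ℝ) :
    U * Matrix.diagonal c * Uᵀ - V * Matrix.diagonal e * Vᵀ
      = U * (Matrix.diagonal c * (Uᵀ * V) - (Uᵀ * V) * Matrix.diagonal e) * Vᵀ := by
  rw [Matrix.mul_sub, Matrix.sub_mul]
  congr 1
  · symm
    calc U * (Matrix.diagonal c * (Uᵀ * V)) * Vᵀ
        = U * Matrix.diagonal c * Uᵀ * (V * Vᵀ) := by simp [Matrix.mul_assoc]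
      _ = U * Matrix.diagonal c * Uᵀ := by rw [hV1, Matrix.mul_one]
  · symm
    calc U * (Uᵀ * V * Matrix.diagonal e) * Vᵀ
        = (U * Uᵀ) * (V * Matrix.diagonal e * Vᵀ) := by simp [Matrix.mul_assoc]
      _ = V * Matrix.diagonal e * Vᵀ := by rw [hU1, Matrix.one_mul]

lemma trace_sq {d : ℕ} (N : Matrix (Fin d) (Fin d) ℝ) :
    Matrix.trace (Nᵀ * N) = ∑ i, ∑ j, (N j i) ^ 2 := by
  simp [Matrix.trace, Matrix.mul_apply, Matrix.diag, sq]

theorem stmt_11 (d : ℕ) (M M' : Matrix (Fin d) (Fin d) ℝ)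
    (hM : M.IsSymm) (hM' : M'.IsSymm)
    (U V : Matrix (Fin d) (Fin d) ℝ) (a b : Fin d → ℝ)
    (hU1 : U * Uᵀ = 1) (hU2 : Uᵀ * U = 1)
    (hV1 : V * Vᵀ = 1) (hV2 : Vᵀ * V = 1)
    (hMdec : M = U * Matrix.diagonal a * Uᵀ)
    (hM'dec : M' = V * Matrix.diagonal b * Vᵀ)
    (f : ℝ → ℝ) (L : ℝ) (hL : 0 < L)
    (hf : ∀ s t : ℝ, |f s - f t| ≤ |s - t| / L) :
    Real.sqrt (Matrix.trace
        ((U * Matrix.diagonal (fun i => f (a i)) * Uᵀ - V * Matrix.diagonal (fun i => f (b i)) * Vᵀ)ᵀ *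
         (U * Matrix.diagonal (fun i => f (a i)) * Uᵀ - V * Matrix.diagonal (fun i => f (b i)) * Vᵀ)))
      ≤ (1 / L) * Real.sqrt (Matrix.trace ((M - M')ᵀ * (M - M'))) := by
  set W := Uᵀ * V with hW
  -- rewrite LHS trace
  have hLf := conj_diff U V hU1 hV1 (fun i => f (a i)) (fun i => f (b i))
  have hLa := conj_diff U V hU1 hV1 a b
  rw [hLf, hMdec, hM'dec, hLa, frob_conj _ _ _ hU2 hV2, frob_conj _ _ _ hU2 hV2,
    trace_sq, trace_sq]
  have hent : ∀ (c e : Fin d → ℝ) (j i : Fin d),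
      (Matrix.diagonal c * W - W * Matrix.diagonal e) j i = (c j - e i) * W j i := by
    intro c e j i
    simp [Matrix.sub_apply, Matrix.diagonal_mul, Matrix.mul_diagonal, sub_mul, mul_comm]
  have hsum : (∑ i, ∑ j, ((Matrix.diagonal (fun i => f (a i)) * W - W * Matrix.diagonal (fun i => f (b i))) j i) ^ 2)
      ≤ (1/L)^2 * ∑ i, ∑ j, ((Matrix.diagonal a * W - W * Matrix.diagonal b) j i) ^ 2 := by
    rw [Finset.mul_sum]
    refine Finset.sum_le_sum fun i _ => ?_
    rw [Finset.mul_sum]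
    refine Finset.sum_le_sum fun j _ => ?_
    rw [hent, hent, mul_pow, mul_pow, ← mul_assoc]
    refine mul_le_mul_of_nonneg_right ?_ (sq_nonneg _)
    have h1 : |f (a j) - f (b i)| ≤ |a j - b i| / L := hf _ _
    have h2 : (f (a j) - f (b i))^2 ≤ (|a j - b i| / L)^2 := by
      rw [← sq_abs]
      exact pow_le_pow_left₀ (abs_nonneg _) h1 2
    calc (f (a j) - f (b i))^2 ≤ (|a j - b i| / L)^2 := h2
      _ = (1/L)^2 * (a j - b i)^2 := by rw [div_pow, sq_abs]; ring
  calc Real.sqrt (∑ i, ∑ j, ((Matrix.diagonal (fun i => f (a i)) * W - W * Matrix.diagonal (fun i => f (b i))) j i) ^ 2)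
      ≤ Real.sqrt ((1/L)^2 * ∑ i, ∑ j, ((Matrix.diagonal a * W - W * Matrix.diagonal b) j i) ^ 2) :=
        Real.sqrt_le_sqrt hsum
    _ = (1/L) * Real.sqrt (∑ i, ∑ j, ((Matrix.diagonal a * W - W * Matrix.diagonal b) j i) ^ 2) := by
        rw [Real.sqrt_mul (sq_nonneg _), Real.sqrt_sq (by positivity)]
end

section
/- Let G and Ĝ be symmetric d×d matrices such that ‖G − Ĝ‖_∞ ≤ ε and such that |λ_i − λ̂_i| ≤ ε for all i, where λ̂₁ ≥ … ≥ λ̂_d are the eigenvalues of Ĝ with orthonormal eigenvectors q₁,…,q_d and λ₁ ≥ … ≥ λ_d are the eigenvalues of G with orthonormal eigenvectors p₁,…,p_d. Then for every k ∈ {1,…,d}, Σ_{i=1}^d (λ_i − λ_k)² ⟨q_k, p_i⟩² ≤ 4ε². -/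
open Matrix

theorem stmt_15 (d : ℕ) (G Ghat : Matrix (Fin d) (Fin d) ℝ)
    (hG : G.IsSymm) (hGhat : Ghat.IsSymm) (eps : ℝ) (heps : 0 ≤ eps)
    (hop : ∀ v : Fin d → ℝ,
      Real.sqrt (((G - Ghat).mulVec v) ⬝ᵥ ((G - Ghat).mulVec v)) ≤ eps * Real.sqrt (v ⬝ᵥ v))
    (lam lamhat : Fin d → ℝ) (p q : Fin d → Fin d → ℝ)
    (hp : ∀ i j, p i ⬝ᵥ p j = if i = j then 1 else 0)
    (hq : ∀ i j, q i ⬝ᵥ q j = if i = j then 1 else 0)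
    (hGp : ∀ i, G.mulVec (p i) = lam i • p i)
    (hGq : ∀ k, Ghat.mulVec (q k) = lamhat k • q k)
    (hmono : ∀ i j : Fin d, i ≤ j → lam j ≤ lam i)
    (hmonohat : ∀ i j : Fin d, i ≤ j → lamhat j ≤ lamhat i)
    (hev : ∀ i, |lam i - lamhat i| ≤ eps) :
    ∀ k : Fin d, ∑ i : Fin d, (lam i - lam k) ^ 2 * (q k ⬝ᵥ p i) ^ 2 ≤ 4 * eps ^ 2 := by
  intro k
  -- the matrix whose rows are the p i
  set P : Matrix (Fin d) (Fin d) ℝ := Matrix.of p with hP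
  have hPPt : P * Pᵀ = 1 := by
    ext i j
    simp only [Matrix.mul_apply, Matrix.transpose_apply, Matrix.one_apply, hP, Matrix.of_apply]
    simpa [dotProduct] using hp i j
  have hPtP : Pᵀ * P = 1 := mul_eq_one_comm.mp hPPt
  -- Parseval: for any v, v ⬝ᵥ v = ∑ i, (v ⬝ᵥ p i)^2
  have parseval : ∀ v : Fin d → ℝ, v ⬝ᵥ v = ∑ i, (v ⬝ᵥ p i) ^ 2 := by
    intro v
    have h1 : (P.mulVec v) ⬝ᵥ (P.mulVec v) = v ⬝ᵥ v := by
      rw [Matrix.dotProduct_mulVec, ← Matrix.mulVec_transpose, Matrix.mulVec_mulVec, hPtP,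
        Matrix.one_mulVec]
    have h2 : ∀ i, (P.mulVec v) i = v ⬝ᵥ p i := by
      intro i
      simp [Matrix.mulVec, dotProduct, hP, mul_comm]
    rw [← h1]
    simp only [dotProduct, h2, sq]
  set v : Fin d → ℝ := G.mulVec (q k) - lam k • q k with hv
  -- key coefficient computation
  have hcoef : ∀ i, v ⬝ᵥ p i = (lam i - lam k) * (q k ⬝ᵥ p i) := by
    intro i
    have hsym : G.mulVec (q k) ⬝ᵥ p i = q k ⬝ᵥ G.mulVec (p i) := by
      rw [Matrix.dotProduct_mulVec, ← Matrix.mulVec_transpose, hG.eq, dotProduct_comm]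
    rw [hv]
    rw [sub_dotProduct, smul_dotProduct, hsym, hGp i, dotProduct_smul]
    simp only [smul_eq_mul]
    ring
  have hsum : ∑ i : Fin d, (lam i - lam k) ^ 2 * (q k ⬝ᵥ p i) ^ 2 = v ⬝ᵥ v := by
    rw [parseval v]
    congr 1
    ext i
    rw [hcoef i, mul_pow]
  rw [hsum]
  -- v = a + c • q k with a = (G - Ghat) (q k), c = lamhat k - lam k
  set a : Fin d → ℝ := (G - Ghat).mulVec (q k) with ha
  set c : ℝ := lamhat k - lam k with hc
  have hva : v = a + c • q k := by
    rw [hv, ha, Matrix.sub_mulVec, hGq k, hc]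
    ext j
    simp
    ring
  -- a ⬝ᵥ a ≤ eps ^ 2
  have haa_nonneg : 0 ≤ a ⬝ᵥ a := by
    simpa [dotProduct] using Finset.sum_nonneg fun i _ => mul_self_nonneg (a i)
  have hqq : q k ⬝ᵥ q k = 1 := by simpa using hq k k
  have haa : a ⬝ᵥ a ≤ eps ^ 2 := by
    have := hop (q k)
    rw [hqq, Real.sqrt_one, mul_one] at this
    have h2 := Real.sqrt_le_sqrt (le_of_eq (rfl : a ⬝ᵥ a = a ⬝ᵥ a))
    calc a ⬝ᵥ a = Real.sqrt (a ⬝ᵥ a) ^ 2 := (Real.sq_sqrt haa_nonneg).symm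
      _ ≤ eps ^ 2 := by
          have h0 := Real.sqrt_nonneg (a ⬝ᵥ a)
          nlinarith
  -- Cauchy–Schwarz: (a ⬝ᵥ q k)^2 ≤ a ⬝ᵥ a
  have hcs : (a ⬝ᵥ q k) ^ 2 ≤ a ⬝ᵥ a := by
    have hcs0 := Finset.sum_mul_sq_le_sq_mul_sq Finset.univ a (q k)
    have hqq' : ∑ i, q k i * q k i = 1 := by simpa [dotProduct] using hq k k
    simpa [dotProduct, sq, hqq'] using hcs0
  have hc2 : c ^ 2 ≤ eps ^ 2 := by
    have := hev k
    have habs : |c| ≤ eps := by rw [hc, abs_sub_comm]; exact this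
    nlinarith [abs_nonneg c, sq_abs c]
  -- expand v ⬝ᵥ v
  have hexp : v ⬝ᵥ v = a ⬝ᵥ a + 2 * c * (a ⬝ᵥ q k) + c ^ 2 := by
    rw [hva]
    rw [add_dotProduct, dotProduct_add, dotProduct_add, smul_dotProduct, smul_dotProduct,
      dotProduct_smul, dotProduct_smul, hqq, dotProduct_comm (q k) a]
    simp [smul_eq_mul]
    ring
  rw [hexp]
  nlinarith [sq_nonneg (c - a ⬝ᵥ q k), sq_nonneg (c + a ⬝ᵥ q k)]
end

section
/- Let G be a symmetric d×d matrix with eigenvalues λ₁ ≥ … ≥ λ_d and orthonormal eigenvectors p₁,…,p_d, and let q₁,…,q_d be another orthonormal basis of R^d. Let Π_r = Σ_{i=1}^r p_i p_iᵀ and Π̂_r = Σ_{k=1}^r q_k q_kᵀ. Then ‖Π_r − Π̂_r‖_∞² ≤ Σ_{k=1}^r Σ_{i=r+1}^d ⟨q_k, p_i⟩². -/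
open Matrix

namespace Stmt16Aux
variable {d : ℕ}
open Matrix

variable {d : ℕ}

lemma vmv_mul (a b c e : Fin d → ℝ) :
    vecMulVec a b * vecMulVec c e = (b ⬝ᵥ c) • vecMulVec a e := by
  ext i j
  simp [Matrix.mul_apply, Matrix.vecMulVec_apply, dotProduct, Finset.mul_sum,
    Finset.sum_mul]
  congr 1; ext k; ring

lemma trace_vmv (a b : Fin d → ℝ) : Matrix.trace (vecMulVec a b) = a ⬝ᵥ b := by
  simp [Matrix.trace, Matrix.diag, Matrix.vecMulVec_apply, dotProduct]

lemma proj_idem (s : Finset (Fin d)) (p : Fin d → Fin d → ℝ)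
    (hp : ∀ i j, p i ⬝ᵥ p j = if i = j then 1 else 0) :
    (∑ i ∈ s, vecMulVec (p i) (p i)) * (∑ j ∈ s, vecMulVec (p j) (p j)) =
      ∑ i ∈ s, vecMulVec (p i) (p i) := by
  rw [Finset.sum_mul_sum]
  refine Finset.sum_congr rfl fun i hi => ?_
  rw [Finset.sum_congr rfl (fun j _ => by rw [vmv_mul, hp])]
  simp only [ite_smul, one_smul, zero_smul]
  rw [Finset.sum_ite_eq s i (fun j => vecMulVec (p i) (p j))]
  simp [hi]

lemma proj_symm (s : Finset (Fin d)) (p : Fin d → Fin d → ℝ) :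
    (∑ i ∈ s, vecMulVec (p i) (p i))ᵀ = ∑ i ∈ s, vecMulVec (p i) (p i) := by
  rw [Matrix.transpose_sum]
  refine Finset.sum_congr rfl fun i _ => ?_
  ext a b
  simp [Matrix.vecMulVec_apply, mul_comm]

lemma trace_proj_mul (S T : Matrix (Fin d) (Fin d) ℝ)
    (hS2 : S*S = S) (hT2 : T*T = T) :
    Matrix.trace ((S - S*T) * (S - T*S)) = Matrix.trace S - Matrix.trace (S*T) := by
  have e : (S - S*T) * (S - T*S) = S*S - S*(T*S) - (S*T)*S + (S*T)*(T*S) := by noncomm_ring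
  rw [e]
  have t1 : Matrix.trace (S*(T*S)) = Matrix.trace (S*T) := by
    rw [Matrix.trace_mul_comm, Matrix.mul_assoc, hS2, Matrix.trace_mul_comm]
  have t2 : Matrix.trace ((S*T)*S) = Matrix.trace (S*T) := by
    rw [Matrix.trace_mul_comm, ← Matrix.mul_assoc, hS2]
  have t3 : Matrix.trace ((S*T)*(T*S)) = Matrix.trace (S*T) := by
    rw [Matrix.mul_assoc, ← Matrix.mul_assoc T T S, hT2, Matrix.trace_mul_comm,
      Matrix.mul_assoc T S S, hS2, Matrix.trace_mul_comm]
  rw [Matrix.trace_add, Matrix.trace_sub, Matrix.trace_sub, hS2, t1, t2, t3]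
  ring

lemma frob_eq_trace (B : Matrix (Fin d) (Fin d) ℝ) :
    ∑ a, ∑ b, (B a b)^2 = Matrix.trace (B * Bᵀ) := by
  simp [Matrix.trace, Matrix.diag, Matrix.mul_apply, sq]


open Matrix


variable {d : ℕ}

lemma mulVec_dot (A : Matrix (Fin d) (Fin d) ℝ) (u w : Fin d → ℝ) :
    (A.mulVec u) ⬝ᵥ w = u ⬝ᵥ (Aᵀ.mulVec w) := by
  rw [Matrix.dotProduct_mulVec, Matrix.vecMul_transpose, dotProduct_comm]

lemma frob_bound (B : Matrix (Fin d) (Fin d) ℝ) (z : Fin d → ℝ) :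
    (B.mulVec z) ⬝ᵥ (B.mulVec z) ≤ (∑ a, ∑ b, (B a b)^2) * (z ⬝ᵥ z) := by
  have h : ∀ a : Fin d, (B.mulVec z a) * (B.mulVec z a) ≤ (∑ b, (B a b)^2) * (z ⬝ᵥ z) := by
    intro a
    have := Finset.sum_mul_sq_le_sq_mul_sq Finset.univ (fun b => B a b) z
    simpa [Matrix.mulVec, dotProduct, sq] using this
  calc (B.mulVec z) ⬝ᵥ (B.mulVec z) = ∑ a, (B.mulVec z a) * (B.mulVec z a) := rfl
    _ ≤ ∑ a, (∑ b, (B a b)^2) * (z ⬝ᵥ z) := Finset.sum_le_sum fun a _ => h a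
    _ = (∑ a, ∑ b, (B a b)^2) * (z ⬝ᵥ z) := by rw [Finset.sum_mul]

lemma core (S T : Matrix (Fin d) (Fin d) ℝ)
    (hS : Sᵀ = S) (hT : Tᵀ = T) (hS2 : S*S = S) (hT2 : T*T = T) (C : ℝ)
    (h1 : ∑ a, ∑ b, ((S - S*T) a b)^2 ≤ C)
    (h2 : ∑ a, ∑ b, ((T - S*T) a b)^2 ≤ C)
    (v : Fin d → ℝ) :
    ((S - T).mulVec v) ⬝ᵥ ((S - T).mulVec v) ≤ C * (v ⬝ᵥ v) := by
  set x := (S - S*T).mulVec v with hx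
  set y := (T - S*T).mulVec v with hy
  have hxy : (S - T).mulVec v = x - y := by
    rw [hx, hy, ← Matrix.sub_mulVec]
    congr 1
    abel
  -- x ⬝ y = 0
  have hxyo : x ⬝ᵥ y = 0 := by
    rw [hx, hy, mulVec_dot, Matrix.mulVec_mulVec]
    have : (S - S*T)ᵀ * (T - S*T) = 0 := by
      rw [Matrix.transpose_sub, Matrix.transpose_mul, hS, hT]
      calc (S - T*S) * (T - S*T)
          = S*T - (S*S)*T - T*(S*T) + T*((S*S)*T) := by noncomm_ring
        _ = 0 := by rw [hS2]; noncomm_ring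
    rw [this, Matrix.zero_mulVec, dotProduct_zero]
  set a := v - T.mulVec v with ha
  set b := T.mulVec v with hb
  have hxa : x = (S - S*T).mulVec a := by
    rw [ha, Matrix.mulVec_sub, Matrix.mulVec_mulVec]
    have : (S - S*T) * T = 0 := by
      rw [Matrix.sub_mul, Matrix.mul_assoc, hT2, sub_self]
    rw [this, Matrix.zero_mulVec, sub_zero]
  have hyb : y = (T - S*T).mulVec b := by
    rw [hb, Matrix.mulVec_mulVec]
    have : (T - S*T) * T = T - S*T := by
      rw [Matrix.sub_mul, hT2, Matrix.mul_assoc, hT2]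
    rw [this]
  have hab : a ⬝ᵥ b = 0 := by
    rw [ha, sub_dotProduct, hb]
    have : (T.mulVec v) ⬝ᵥ (T.mulVec v) = v ⬝ᵥ T.mulVec v := by
      rw [mulVec_dot, Matrix.mulVec_mulVec, hT, hT2]
    rw [this, sub_self]
  have habv : a ⬝ᵥ a + b ⬝ᵥ b = v ⬝ᵥ v := by
    have hv : v = a + b := by rw [ha, hb]; abel
    rw [hv, add_dotProduct, dotProduct_add, dotProduct_add]
    have hba : b ⬝ᵥ a = 0 := by rw [dotProduct_comm]; exact hab
    rw [hab, hba]
    ring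
  have e1 : x ⬝ᵥ x ≤ C * (a ⬝ᵥ a) := by
    calc x ⬝ᵥ x = ((S - S*T).mulVec a) ⬝ᵥ ((S - S*T).mulVec a) := by rw [hxa]
      _ ≤ (∑ i, ∑ j, ((S - S*T) i j)^2) * (a ⬝ᵥ a) := frob_bound _ _
      _ ≤ C * (a ⬝ᵥ a) := by
          apply mul_le_mul_of_nonneg_right h1 (Finset.sum_nonneg fun i _ => mul_self_nonneg (a i))
  have e2 : y ⬝ᵥ y ≤ C * (b ⬝ᵥ b) := by
    calc y ⬝ᵥ y = ((T - S*T).mulVec b) ⬝ᵥ ((T - S*T).mulVec b) := by rw [hyb]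
      _ ≤ (∑ i, ∑ j, ((T - S*T) i j)^2) * (b ⬝ᵥ b) := frob_bound _ _
      _ ≤ C * (b ⬝ᵥ b) := by
          apply mul_le_mul_of_nonneg_right h2 (Finset.sum_nonneg fun i _ => mul_self_nonneg (b i))
  have expand : (x - y) ⬝ᵥ (x - y) = x ⬝ᵥ x + y ⬝ᵥ y := by
    have hyx : y ⬝ᵥ x = 0 := by rw [dotProduct_comm]; exact hxyo
    rw [sub_dotProduct, dotProduct_sub, dotProduct_sub, hxyo, hyx]
    ring
  rw [hxy, expand, ← habv]
  calc x ⬝ᵥ x + y ⬝ᵥ y ≤ C * (a ⬝ᵥ a) + C * (b ⬝ᵥ b) := add_le_add e1 e2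
    _ = C * (a ⬝ᵥ a + b ⬝ᵥ b) := by ring


lemma complete (p : Fin d → Fin d → ℝ)
    (hp : ∀ i j, p i ⬝ᵥ p j = if i = j then 1 else 0) :
    (∑ i : Fin d, vecMulVec (p i) (p i)) = 1 := by
  have h1 : (Matrix.of p) * (Matrix.of p)ᵀ = 1 := by
    ext i j
    simpa [Matrix.mul_apply, Matrix.one_apply, dotProduct] using hp i j
  have h2 : (Matrix.of p)ᵀ * (Matrix.of p) = 1 := mul_eq_one_comm.mp h1
  ext a b
  have := congrFun (congrFun h2 a) b
  simp only [Matrix.mul_apply, Matrix.transpose_apply, Matrix.of_apply] at this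
  simpa [Matrix.sum_apply, Matrix.vecMulVec_apply] using this

lemma parseval (p : Fin d → Fin d → ℝ)
    (hp : ∀ i j, p i ⬝ᵥ p j = if i = j then 1 else 0) (w : Fin d → ℝ) :
    ∑ i : Fin d, (w ⬝ᵥ p i)^2 = w ⬝ᵥ w := by
  have key : ∀ i : Fin d, (w ⬝ᵥ p i)^2 = w ⬝ᵥ ((vecMulVec (p i) (p i)).mulVec w) := by
    intro i
    simp only [Matrix.mulVec, Matrix.vecMulVec_apply, dotProduct, sq]
    rw [Finset.mul_sum]
    congr 1; ext a
    rw [Finset.sum_mul, Finset.mul_sum]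
    congr 1; ext b
    ring
  calc ∑ i : Fin d, (w ⬝ᵥ p i)^2 = ∑ i : Fin d, w ⬝ᵥ ((vecMulVec (p i) (p i)).mulVec w) :=
        Finset.sum_congr rfl fun i _ => key i
    _ = w ⬝ᵥ ((∑ i : Fin d, vecMulVec (p i) (p i)).mulVec w) := by
        have hmv : (∑ i : Fin d, vecMulVec (p i) (p i)).mulVec w
            = ∑ i : Fin d, (vecMulVec (p i) (p i)).mulVec w := by
          ext a
          simp only [Matrix.mulVec, dotProduct, Matrix.sum_apply, Finset.sum_apply,
            Finset.sum_mul]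
          rw [Finset.sum_comm]
        rw [hmv]
        simp only [dotProduct, Finset.sum_apply, Finset.mul_sum]
        rw [Finset.sum_comm]
    _ = w ⬝ᵥ w := by rw [complete p hp, Matrix.one_mulVec]

end Stmt16Aux

theorem stmt_16 (d : ℕ) (G : Matrix (Fin d) (Fin d) ℝ) (hG : G.IsSymm)
    (lam : Fin d → ℝ) (p q : Fin d → Fin d → ℝ)
    (hp : ∀ i j, p i ⬝ᵥ p j = if i = j then 1 else 0)
    (hq : ∀ i j, q i ⬝ᵥ q j = if i = j then 1 else 0)
    (hGp : ∀ i, G.mulVec (p i) = lam i • p i)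
    (hmono : ∀ i j : Fin d, i ≤ j → lam j ≤ lam i)
    (r : ℕ) (hr : r ≤ d) :
    ∀ v : Fin d → ℝ,
      (((∑ i ∈ Finset.univ.filter (fun i : Fin d => (i : ℕ) < r), vecMulVec (p i) (p i)) -
        (∑ k ∈ Finset.univ.filter (fun k : Fin d => (k : ℕ) < r), vecMulVec (q k) (q k))).mulVec v) ⬝ᵥ
      (((∑ i ∈ Finset.univ.filter (fun i : Fin d => (i : ℕ) < r), vecMulVec (p i) (p i)) -
        (∑ k ∈ Finset.univ.filter (fun k : Fin d => (k : ℕ) < r), vecMulVec (q k) (q k))).mulVec v)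
      ≤ (∑ k ∈ Finset.univ.filter (fun k : Fin d => (k : ℕ) < r),
          ∑ i ∈ Finset.univ.filter (fun i : Fin d => r ≤ (i : ℕ)), (q k ⬝ᵥ p i) ^ 2) * (v ⬝ᵥ v) := by
  intro v
  classical
  open Stmt16Aux in
  set I : Finset (Fin d) := Finset.univ.filter (fun i : Fin d => (i : ℕ) < r) with hI
  set S : Matrix (Fin d) (Fin d) ℝ := ∑ i ∈ I, vecMulVec (p i) (p i) with hSdef
  set T : Matrix (Fin d) (Fin d) ℝ := ∑ k ∈ I, vecMulVec (q k) (q k) with hTdef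
  set C : ℝ := ∑ k ∈ I, ∑ i ∈ Finset.univ.filter (fun i : Fin d => r ≤ (i : ℕ)),
      (q k ⬝ᵥ p i) ^ 2 with hCdef
  have hS2 : S * S = S := Stmt16Aux.proj_idem I p hp
  have hT2 : T * T = T := Stmt16Aux.proj_idem I q hq
  have hSsym : Sᵀ = S := Stmt16Aux.proj_symm I p
  have hTsym : Tᵀ = T := Stmt16Aux.proj_symm I q
  -- trace S
  have htrS : Matrix.trace S = (I.card : ℝ) := by
    rw [hSdef, Matrix.trace_sum]
    rw [Finset.sum_congr rfl (fun i _ => Stmt16Aux.trace_vmv (p i) (p i))]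
    rw [Finset.sum_congr rfl (fun i _ => hp i i)]
    simp
  have htrT : Matrix.trace T = (I.card : ℝ) := by
    rw [hTdef, Matrix.trace_sum]
    rw [Finset.sum_congr rfl (fun k _ => Stmt16Aux.trace_vmv (q k) (q k))]
    rw [Finset.sum_congr rfl (fun k _ => hq k k)]
    simp
  -- trace (S*T)
  have htrST : Matrix.trace (S*T) = ∑ k ∈ I, ∑ i ∈ I, (q k ⬝ᵥ p i)^2 := by
    rw [hSdef, hTdef, Finset.sum_mul_sum, Matrix.trace_sum]
    rw [Finset.sum_congr rfl (fun i _ => Matrix.trace_sum _ _)]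
    rw [Finset.sum_comm]
    refine Finset.sum_congr rfl fun k _ => Finset.sum_congr rfl fun i _ => ?_
    rw [Stmt16Aux.vmv_mul, Matrix.trace_smul, Stmt16Aux.trace_vmv]
    rw [dotProduct_comm (p i) (q k)]
    simp [sq]
  -- C = |I| - trace(S*T)
  have hCval : C = (I.card : ℝ) - Matrix.trace (S*T) := by
    rw [htrST, hCdef]
    have perk : ∀ k ∈ I, (∑ i ∈ Finset.univ.filter (fun i : Fin d => r ≤ (i : ℕ)),
        (q k ⬝ᵥ p i) ^ 2) = 1 - ∑ i ∈ I, (q k ⬝ᵥ p i)^2 := by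
      intro k hk
      have hsplit : (∑ i ∈ I, (q k ⬝ᵥ p i)^2) +
          (∑ i ∈ Finset.univ.filter (fun i : Fin d => r ≤ (i : ℕ)), (q k ⬝ᵥ p i)^2)
          = ∑ i : Fin d, (q k ⬝ᵥ p i)^2 := by
        rw [hI]
        rw [show Finset.univ.filter (fun i : Fin d => r ≤ (i : ℕ))
            = Finset.univ.filter (fun i : Fin d => ¬ ((i : ℕ) < r)) by
          apply Finset.filter_congr; intro i _; simp [not_lt]]
        exact Finset.sum_filter_add_sum_filter_not _ _ _
      have hpar : ∑ i : Fin d, (q k ⬝ᵥ p i)^2 = 1 := by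
        rw [Stmt16Aux.parseval p hp (q k), hq k k]; simp
      linarith [hsplit, hpar]
    rw [Finset.sum_congr rfl perk, Finset.sum_sub_distrib]
    simp
  -- frobenius bounds
  have hfrob1 : ∑ a, ∑ b, ((S - S*T) a b)^2 ≤ C := by
    rw [Stmt16Aux.frob_eq_trace]
    have ht : (S - S*T)ᵀ = S - T*S := by
      rw [Matrix.transpose_sub, Matrix.transpose_mul, hSsym, hTsym]
    rw [ht, Stmt16Aux.trace_proj_mul S T hS2 hT2, htrS, hCval]
  have hfrob2 : ∑ a, ∑ b, ((T - S*T) a b)^2 ≤ C := by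
    rw [Stmt16Aux.frob_eq_trace]
    have ht : (T - S*T)ᵀ = T - T*S := by
      rw [Matrix.transpose_sub, Matrix.transpose_mul, hSsym, hTsym]
    rw [ht, Matrix.trace_mul_comm, Stmt16Aux.trace_proj_mul T S hT2 hS2, htrT,
      Matrix.trace_mul_comm, hCval]
  exact Stmt16Aux.core S T hSsym hTsym hS2 hT2 C hfrob1 hfrob2 v
end

section
/- Let G and Ĝ be symmetric positive semi-definite d×d matrices with ‖G − Ĝ‖_∞ ≤ ε. Let λ₁ ≥ … ≥ λ_d be the eigenvalues of G with orthonormal eigenvectors p₁,…,p_d, let q₁,…,q_d be an orthonormal eigenbasis of Ĝ with eigenvalues in non-increasing order, and suppose λ_r − λ_{r+1} > 0. Denote by Π_r and Π̂_r the orthogonal projectors onto span{p₁,…,p_r} and span{q₁,…,q_r}. Then ‖Π_r − Π̂_r‖_∞ ≤ √(2r) · ε / (λ_r − λ_{r+1}). -/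
open Matrix

lemma aux_dsn {d : ℕ} (v : Fin d → ℝ) : 0 ≤ v ⬝ᵥ v :=
  Finset.sum_nonneg fun _ _ => mul_self_nonneg _

lemma aux_cs {d : ℕ} (u v : Fin d → ℝ) : (u ⬝ᵥ v) ^ 2 ≤ (u ⬝ᵥ u) * (v ⬝ᵥ v) := by
  simpa [dotProduct, sq] using Finset.sum_mul_sq_le_sq_mul_sq Finset.univ u v

lemma aux_dot_le {d : ℕ} (u v : Fin d → ℝ) :
    u ⬝ᵥ v ≤ Real.sqrt (u ⬝ᵥ u) * Real.sqrt (v ⬝ᵥ v) := by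
  calc u ⬝ᵥ v ≤ |u ⬝ᵥ v| := le_abs_self _
    _ = Real.sqrt ((u ⬝ᵥ v) ^ 2) := (Real.sqrt_sq_eq_abs _).symm
    _ ≤ Real.sqrt ((u ⬝ᵥ u) * (v ⬝ᵥ v)) := Real.sqrt_le_sqrt (aux_cs u v)
    _ = _ := Real.sqrt_mul (aux_dsn u) _

lemma aux_norm_add {d : ℕ} (a b : Fin d → ℝ) :
    Real.sqrt ((a + b) ⬝ᵥ (a + b)) ≤ Real.sqrt (a ⬝ᵥ a) + Real.sqrt (b ⬝ᵥ b) := by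
  have hab : (a + b) ⬝ᵥ (a + b) = a ⬝ᵥ a + 2 * (a ⬝ᵥ b) + b ⬝ᵥ b := by
    simp [add_dotProduct, dotProduct_add, dotProduct_comm b a]; ring
  have h2 : (a + b) ⬝ᵥ (a + b) ≤ (Real.sqrt (a ⬝ᵥ a) + Real.sqrt (b ⬝ᵥ b)) ^ 2 := by
    rw [hab]
    nlinarith [aux_dot_le a b, Real.sq_sqrt (aux_dsn a), Real.sq_sqrt (aux_dsn b),
      Real.sqrt_nonneg (a ⬝ᵥ a), Real.sqrt_nonneg (b ⬝ᵥ b)]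
  calc Real.sqrt ((a + b) ⬝ᵥ (a + b))
      ≤ Real.sqrt ((Real.sqrt (a ⬝ᵥ a) + Real.sqrt (b ⬝ᵥ b)) ^ 2) := Real.sqrt_le_sqrt h2
    _ = _ := Real.sqrt_sq (by positivity)

lemma aux_sum_dot {d : ℕ} (s : Finset (Fin d)) (f : Fin d → Fin d → ℝ) (w : Fin d → ℝ) :
    (∑ i ∈ s, f i) ⬝ᵥ w = ∑ i ∈ s, f i ⬝ᵥ w := by
  simp only [dotProduct, Finset.sum_apply, Finset.sum_mul]
  exact Finset.sum_comm

lemma aux_dot_sum {d : ℕ} (s : Finset (Fin d)) (w : Fin d → ℝ) (f : Fin d → Fin d → ℝ) :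
    w ⬝ᵥ (∑ i ∈ s, f i) = ∑ i ∈ s, w ⬝ᵥ f i := by
  simp only [dotProduct, Finset.sum_apply, Finset.mul_sum]
  exact Finset.sum_comm

lemma aux_orthsum {d : ℕ} {e : Fin d → Fin d → ℝ}
    (he : ∀ i j, e i ⬝ᵥ e j = if i = j then 1 else 0) (s : Finset (Fin d)) (a b : Fin d → ℝ) :
    (∑ i ∈ s, a i • e i) ⬝ᵥ (∑ j ∈ s, b j • e j) = ∑ i ∈ s, a i * b i := by
  rw [aux_sum_dot]
  refine Finset.sum_congr rfl fun i hi => ?_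
  rw [aux_dot_sum]
  have h1 : ∀ j ∈ s, (a i • e i) ⬝ᵥ (b j • e j) = if i = j then a i * b i else 0 := by
    intro j hj
    rw [smul_dotProduct, dotProduct_smul, he i j]
    by_cases h : i = j <;> simp [h] <;> ring
  rw [Finset.sum_congr rfl h1, Finset.sum_ite_eq s i (fun _ => a i * b i)]
  simp [hi]

lemma aux_parseval {d : ℕ} {e : Fin d → Fin d → ℝ}
    (he : ∀ i j, e i ⬝ᵥ e j = if i = j then 1 else 0) (x y : Fin d → ℝ) :
    ∑ i, (e i ⬝ᵥ x) * (e i ⬝ᵥ y) = x ⬝ᵥ y := by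
  set E : Matrix (Fin d) (Fin d) ℝ := Matrix.of e with hE
  have h1 : E * Eᵀ = 1 := by
    ext i j
    simpa [Matrix.mul_apply, Matrix.one_apply, dotProduct, hE] using he i j
  have h2 : Eᵀ * E = 1 := mul_eq_one_comm.mp h1
  have key : (E *ᵥ x) ⬝ᵥ (E *ᵥ y) = x ⬝ᵥ y := by
    rw [dotProduct_mulVec]
    have hx : E *ᵥ x = x ᵥ* Eᵀ := by
      rw [← Matrix.mulVec_transpose Eᵀ x, Matrix.transpose_transpose]
    rw [hx, Matrix.vecMul_vecMul, h2, Matrix.vecMul_one]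
  simpa [dotProduct, Matrix.mulVec, hE] using key

lemma aux_sumvec_sq {d : ℕ} (s : Finset (Fin d)) (a : Fin d → ℝ) (g : Fin d → Fin d → ℝ) :
    (∑ k ∈ s, a k • g k) ⬝ᵥ (∑ k ∈ s, a k • g k) ≤
      (∑ k ∈ s, (a k) ^ 2) * (∑ k ∈ s, g k ⬝ᵥ g k) := by
  have hcoord : ∀ j : Fin d, ((∑ k ∈ s, a k • g k) j) ^ 2 ≤
      (∑ k ∈ s, (a k) ^ 2) * (∑ k ∈ s, (g k j) ^ 2) := by
    intro j
    have := Finset.sum_mul_sq_le_sq_mul_sq s a (fun k => g k j)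
    simpa [Finset.sum_apply, Pi.smul_apply, smul_eq_mul] using this
  calc (∑ k ∈ s, a k • g k) ⬝ᵥ (∑ k ∈ s, a k • g k)
      = ∑ j, ((∑ k ∈ s, a k • g k) j) ^ 2 := by simp [dotProduct, sq]
    _ ≤ ∑ j, (∑ k ∈ s, (a k) ^ 2) * (∑ k ∈ s, (g k j) ^ 2) :=
        Finset.sum_le_sum fun j _ => hcoord j
    _ = (∑ k ∈ s, (a k) ^ 2) * (∑ k ∈ s, g k ⬝ᵥ g k) := by
        rw [← Finset.mul_sum]
        congr 1
        rw [Finset.sum_comm]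
        simp [dotProduct, sq]

lemma aux_proj_mulVec {d : ℕ} (s : Finset (Fin d)) (e : Fin d → Fin d → ℝ) (v : Fin d → ℝ) :
    (∑ i ∈ s, vecMulVec (e i) (e i)) *ᵥ v = ∑ i ∈ s, (e i ⬝ᵥ v) • e i := by
  ext j
  simp only [Matrix.mulVec, dotProduct, Matrix.sum_apply, vecMulVec_apply,
    Finset.sum_apply, Pi.smul_apply, smul_eq_mul, Finset.sum_mul]
  rw [Finset.sum_comm]
  refine Finset.sum_congr rfl fun i _ => Finset.sum_congr rfl fun l _ => by ring

theorem stmt_17 (d : ℕ) (G Ghat : Matrix (Fin d) (Fin d) ℝ)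
    (hG : G.PosSemidef) (hGhat : Ghat.PosSemidef) (eps : ℝ) (heps : 0 ≤ eps)
    (hop : ∀ v : Fin d → ℝ,
      Real.sqrt (((G - Ghat).mulVec v) ⬝ᵥ ((G - Ghat).mulVec v)) ≤ eps * Real.sqrt (v ⬝ᵥ v))
    (lam lamhat : Fin d → ℝ) (p q : Fin d → Fin d → ℝ)
    (hp : ∀ i j, p i ⬝ᵥ p j = if i = j then 1 else 0)
    (hq : ∀ i j, q i ⬝ᵥ q j = if i = j then 1 else 0)
    (hGp : ∀ i, G.mulVec (p i) = lam i • p i)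
    (hGq : ∀ k, Ghat.mulVec (q k) = lamhat k • q k)
    (hmono : ∀ i j : Fin d, i ≤ j → lam j ≤ lam i)
    (hmonohat : ∀ i j : Fin d, i ≤ j → lamhat j ≤ lamhat i)
    (hev : ∀ i, |lam i - lamhat i| ≤ eps)
    (r : ℕ) (hr1 : 1 ≤ r) (hrd : r < d)
    (hgap : 0 < lam ⟨r - 1, by omega⟩ - lam ⟨r, hrd⟩) :
    ∀ v : Fin d → ℝ,
      Real.sqrt ((((∑ i ∈ Finset.univ.filter (fun i : Fin d => (i : ℕ) < r), vecMulVec (p i) (p i)) -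
        (∑ k ∈ Finset.univ.filter (fun k : Fin d => (k : ℕ) < r), vecMulVec (q k) (q k))).mulVec v) ⬝ᵥ
        (((∑ i ∈ Finset.univ.filter (fun i : Fin d => (i : ℕ) < r), vecMulVec (p i) (p i)) -
        (∑ k ∈ Finset.univ.filter (fun k : Fin d => (k : ℕ) < r), vecMulVec (q k) (q k))).mulVec v))
      ≤ (2 * Real.sqrt r * eps / (lam ⟨r - 1, by omega⟩ - lam ⟨r, hrd⟩)) * Real.sqrt (v ⬝ᵥ v) := by
  intro v
  classical
  have hrm : r - 1 < d := by omega
  set ir : Fin d := (⟨r - 1, hrm⟩ : Fin d) with hir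
  set rrr : Fin d := (⟨r, hrd⟩ : Fin d) with hrr
  have hδ0 : (0 : ℝ) < lam ir - lam rrr := hgap
  set δ : ℝ := lam ir - lam rrr with hδdef
  set I : Finset (Fin d) := Finset.univ.filter (fun i : Fin d => (i : ℕ) < r) with hIdef
  set c : Fin d → Fin d → ℝ := fun k i => p i ⬝ᵥ q k with hc
  -- card of I
  have hIeq : I = Finset.image (Fin.castLE hrd.le) Finset.univ := by
    ext i
    simp only [hIdef, Finset.mem_filter, Finset.mem_univ, true_and, Finset.mem_image]
    constructor
    · intro h; exact ⟨⟨(i : ℕ), h⟩, rfl⟩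
    · rintro ⟨j, rfl⟩; exact j.2
  have hcard : I.card = r := by
    rw [hIeq, Finset.card_image_of_injective _ (Fin.castLE_injective _), Finset.card_univ,
      Fintype.card_fin]
  -- symmetry of G
  have hGt : Gᵀ = G := by
    rw [← Matrix.conjTranspose_eq_transpose_of_trivial]
    exact hG.1
  have hGsym : ∀ u w2 : Fin d → ℝ, (G *ᵥ u) ⬝ᵥ w2 = u ⬝ᵥ (G *ᵥ w2) := by
    intro u w2
    conv_rhs => rw [dotProduct_mulVec]
    rw [← Matrix.mulVec_transpose G u, hGt]
  have hPar : ∀ x y : Fin d → ℝ, ∑ i, (p i ⬝ᵥ x) * (p i ⬝ᵥ y) = x ⬝ᵥ y := aux_parseval hp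
  -- Step B: per-k tail bound
  set J : Finset (Fin d) := Finset.univ.filter (fun i : Fin d => ¬ ((i : ℕ) < r)) with hJdef
  have hSk : ∀ k ∈ I, ∑ i ∈ J, (c k i) ^ 2 ≤ 4 * eps ^ 2 / δ ^ 2 := by
    intro k hk
    have hkr : (k : ℕ) < r := by
      have := Finset.mem_filter.mp hk; exact this.2
    set w' : Fin d → ℝ := G *ᵥ q k - lam k • q k with hw'
    have hqk1 : q k ⬝ᵥ q k = 1 := by simpa using hq k k
    have hwi : ∀ i, p i ⬝ᵥ w' = (lam i - lam k) * c k i := by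
      intro i
      have h1 : p i ⬝ᵥ (G *ᵥ q k) = lam i * c k i := by
        rw [← hGsym (p i) (q k), hGp i, smul_dotProduct]
        simp [hc, smul_eq_mul]
      have h2 : p i ⬝ᵥ (lam k • q k) = lam k * c k i := by
        rw [dotProduct_smul]; simp [hc, smul_eq_mul]
      calc p i ⬝ᵥ w' = p i ⬝ᵥ (G *ᵥ q k) - p i ⬝ᵥ (lam k • q k) := by
            rw [hw', dotProduct_sub]
        _ = (lam i - lam k) * c k i := by rw [h1, h2]; ring
    have hwnorm : Real.sqrt (w' ⬝ᵥ w') ≤ 2 * eps := by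
      have hsplit : w' = ((G - Ghat) *ᵥ q k) + ((lamhat k - lam k) • q k) := by
        rw [hw', Matrix.sub_mulVec, hGq k]
        ext j
        simp only [Pi.sub_apply, Pi.add_apply, Pi.smul_apply, smul_eq_mul]
        ring
      have h2 : Real.sqrt (((G - Ghat) *ᵥ q k) ⬝ᵥ ((G - Ghat) *ᵥ q k)) ≤ eps := by
        have h := hop (q k); rwa [hqk1, Real.sqrt_one, mul_one] at h
      have h3 : Real.sqrt (((lamhat k - lam k) • q k) ⬝ᵥ ((lamhat k - lam k) • q k)) ≤ eps := by
        have he : ((lamhat k - lam k) • q k) ⬝ᵥ ((lamhat k - lam k) • q k)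
            = (lamhat k - lam k) ^ 2 := by
          rw [smul_dotProduct, dotProduct_smul, hqk1]
          simp [smul_eq_mul]; ring
        rw [he, Real.sqrt_sq_eq_abs, abs_sub_comm]
        exact hev k
      calc Real.sqrt (w' ⬝ᵥ w')
          ≤ Real.sqrt (((G - Ghat) *ᵥ q k) ⬝ᵥ ((G - Ghat) *ᵥ q k))
            + Real.sqrt (((lamhat k - lam k) • q k) ⬝ᵥ ((lamhat k - lam k) • q k)) := by
            rw [hsplit]; exact aux_norm_add _ _
        _ ≤ 2 * eps := by linarith
    have hwsq : w' ⬝ᵥ w' ≤ 4 * eps ^ 2 := by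
      nlinarith [Real.sq_sqrt (aux_dsn w'), hwnorm, Real.sqrt_nonneg (w' ⬝ᵥ w')]
    have hpar2 : ∑ i, ((lam i - lam k) * c k i) ^ 2 = w' ⬝ᵥ w' := by
      calc ∑ i, ((lam i - lam k) * c k i) ^ 2 = ∑ i, (p i ⬝ᵥ w') * (p i ⬝ᵥ w') := by
            refine Finset.sum_congr rfl fun i _ => ?_
            rw [hwi i]; ring
        _ = w' ⬝ᵥ w' := hPar w' w'
    have hgapki : ∀ i ∈ J, δ ^ 2 * (c k i) ^ 2 ≤ ((lam i - lam k) * c k i) ^ 2 := by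
      intro i hi
      have hige : r ≤ (i : ℕ) := by
        have := (Finset.mem_filter.mp hi).2; omega
      have hklr : k ≤ ir := by
        rw [Fin.le_def]; simp [hir]; omega
      have hrri : rrr ≤ i := by
        rw [Fin.le_def]; simpa [hrr] using hige
      have h1 : lam ir ≤ lam k := hmono k ir hklr
      have h2 : lam i ≤ lam rrr := hmono rrr i hrri
      have h3 : δ ≤ lam k - lam i := by rw [hδdef]; linarith
      have h4 : δ ^ 2 ≤ (lam i - lam k) ^ 2 := by nlinarith
      nlinarith [mul_le_mul_of_nonneg_right h4 (sq_nonneg (c k i))]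
    have hsum1 : δ ^ 2 * ∑ i ∈ J, (c k i) ^ 2 ≤ w' ⬝ᵥ w' := by
      rw [Finset.mul_sum]
      calc ∑ i ∈ J, δ ^ 2 * (c k i) ^ 2 ≤ ∑ i ∈ J, ((lam i - lam k) * c k i) ^ 2 :=
            Finset.sum_le_sum hgapki
        _ ≤ ∑ i, ((lam i - lam k) * c k i) ^ 2 :=
            Finset.sum_le_sum_of_subset_of_nonneg (Finset.filter_subset _ _)
              (fun i _ _ => sq_nonneg _)
        _ = w' ⬝ᵥ w' := hpar2
    have hδ2 : (0 : ℝ) < δ ^ 2 := by positivity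
    rw [le_div_iff₀ hδ2]
    nlinarith [hsum1, hwsq]
  -- row sums are 1
  have hrowsum : ∀ k, ∑ i, (c k i) ^ 2 = 1 := by
    intro k
    calc ∑ i, (c k i) ^ 2 = ∑ i, (p i ⬝ᵥ q k) * (p i ⬝ᵥ q k) := by
          refine Finset.sum_congr rfl fun i _ => ?_; rw [hc]; ring
      _ = q k ⬝ᵥ q k := hPar (q k) (q k)
      _ = 1 := by simpa using hq k k
  have hIsplit : ∀ k, ∑ i ∈ I, (c k i) ^ 2 + ∑ i ∈ J, (c k i) ^ 2 = 1 := by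
    intro k
    rw [← hrowsum k]
    exact Finset.sum_filter_add_sum_filter_not Finset.univ _ _
  -- T
  set T : ℝ := ∑ k ∈ I, (1 - ∑ i ∈ I, (c k i) ^ 2) with hT
  have hTbound : T ≤ (r : ℝ) * (4 * eps ^ 2 / δ ^ 2) := by
    have h1 : ∀ k ∈ I, 1 - ∑ i ∈ I, (c k i) ^ 2 = ∑ i ∈ J, (c k i) ^ 2 := by
      intro k _
      have := hIsplit k; linarith
    calc T = ∑ k ∈ I, ∑ i ∈ J, (c k i) ^ 2 := Finset.sum_congr rfl h1
      _ ≤ ∑ _k ∈ I, (4 * eps ^ 2 / δ ^ 2) := Finset.sum_le_sum hSk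
      _ = (I.card : ℝ) * (4 * eps ^ 2 / δ ^ 2) := by rw [Finset.sum_const, nsmul_eq_mul]
      _ = (r : ℝ) * (4 * eps ^ 2 / δ ^ 2) := by rw [hcard]
  -- T' = T
  have hT' : ∑ i ∈ I, (1 - ∑ k ∈ I, (c k i) ^ 2) = T := by
    rw [hT, Finset.sum_sub_distrib, Finset.sum_sub_distrib, Finset.sum_comm]
  -- vectors
  set α : Fin d → ℝ := fun k => q k ⬝ᵥ v with hα
  set u2 : Fin d → ℝ := ∑ k ∈ I, α k • q k with hu2
  set u1 : Fin d → ℝ := v - u2 with hu1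
  have hqu2 : ∀ k ∈ I, q k ⬝ᵥ u2 = α k := by
    intro k hk
    rw [hu2, aux_dot_sum]
    have h1 : ∀ k' ∈ I, q k ⬝ᵥ (α k' • q k') = if k = k' then α k else 0 := by
      intro k' _
      rw [dotProduct_smul, hq k k']
      by_cases h : k = k' <;> simp [h]
    rw [Finset.sum_congr rfl h1, Finset.sum_ite_eq I k (fun _ => α k), if_pos hk]
  have hqu1 : ∀ k ∈ I, q k ⬝ᵥ u1 = 0 := by
    intro k hk
    rw [hu1, dotProduct_sub, hqu2 k hk]
    simp [hα]
  have hu1u2 : u1 ⬝ᵥ u2 = 0 := by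
    rw [hu2, aux_dot_sum]
    refine Finset.sum_eq_zero fun k hk => ?_
    rw [dotProduct_smul, dotProduct_comm, hqu1 k hk, smul_zero]
  have hvv : v ⬝ᵥ v = u1 ⬝ᵥ u1 + u2 ⬝ᵥ u2 := by
    have hv : v = u1 + u2 := by rw [hu1, sub_add_cancel]
    have he : (u1 + u2) ⬝ᵥ (u1 + u2) = u1 ⬝ᵥ u1 + u2 ⬝ᵥ u2 := by
      rw [add_dotProduct, dotProduct_add, dotProduct_add, hu1u2, dotProduct_comm u2 u1, hu1u2]
      ring
    rw [← hv] at he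
    exact he
  -- w and x vectors
  set w : Fin d → Fin d → ℝ := fun k => q k - ∑ i ∈ I, c k i • p i with hwdef
  set x : Fin d → Fin d → ℝ := fun i => p i - ∑ k ∈ I, c k i • q k with hxdef
  have hpw : ∀ i ∈ I, ∀ k, p i ⬝ᵥ w k = 0 := by
    intro i hi k
    have h0 : p i ⬝ᵥ (∑ i' ∈ I, c k i' • p i') = c k i := by
      rw [aux_dot_sum]
      have h1 : ∀ i' ∈ I, p i ⬝ᵥ (c k i' • p i') = if i = i' then c k i else 0 := by
        intro i' _
        rw [dotProduct_smul, hp i i']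
        by_cases h : i = i' <;> simp [h]
      rw [Finset.sum_congr rfl h1, Finset.sum_ite_eq I i (fun _ => c k i), if_pos hi]
    have : w k = q k - ∑ i' ∈ I, c k i' • p i' := by rw [hwdef]
    rw [this, dotProduct_sub, h0]
    simp [hc]
  have hwk : ∀ k ∈ I, w k ⬝ᵥ w k = 1 - ∑ i ∈ I, (c k i) ^ 2 := by
    intro k _
    have hs : (∑ i ∈ I, c k i • p i) ⬝ᵥ (∑ i ∈ I, c k i • p i) = ∑ i ∈ I, (c k i) ^ 2 := by
      rw [aux_orthsum hp I (fun i => c k i) (fun i => c k i)]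
      simp [sq]
    have hqs : q k ⬝ᵥ (∑ i ∈ I, c k i • p i) = ∑ i ∈ I, (c k i) ^ 2 := by
      rw [aux_dot_sum]
      refine Finset.sum_congr rfl fun i _ => ?_
      rw [dotProduct_smul, dotProduct_comm]
      simp [hc, sq, smul_eq_mul]
    have hsq : (∑ i ∈ I, c k i • p i) ⬝ᵥ q k = ∑ i ∈ I, (c k i) ^ 2 := by
      rw [dotProduct_comm]; exact hqs
    have hwexp : w k = q k - ∑ i ∈ I, c k i • p i := by rw [hwdef]
    rw [hwexp, sub_dotProduct, dotProduct_sub, dotProduct_sub, hs, hqs, hsq]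
    have : q k ⬝ᵥ q k = 1 := by simpa using hq k k
    rw [this]; ring
  have hxi : ∀ i ∈ I, x i ⬝ᵥ x i = 1 - ∑ k ∈ I, (c k i) ^ 2 := by
    intro i _
    have hs : (∑ k ∈ I, c k i • q k) ⬝ᵥ (∑ k ∈ I, c k i • q k) = ∑ k ∈ I, (c k i) ^ 2 := by
      rw [aux_orthsum hq I (fun k => c k i) (fun k => c k i)]
      simp [sq]
    have hps : p i ⬝ᵥ (∑ k ∈ I, c k i • q k) = ∑ k ∈ I, (c k i) ^ 2 := by
      rw [aux_dot_sum]
      refine Finset.sum_congr rfl fun k _ => ?_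
      rw [dotProduct_smul]
      simp [hc, sq, smul_eq_mul]
    have hsp : (∑ k ∈ I, c k i • q k) ⬝ᵥ p i = ∑ k ∈ I, (c k i) ^ 2 := by
      rw [dotProduct_comm]; exact hps
    have hxexp : x i = p i - ∑ k ∈ I, c k i • q k := by rw [hxdef]
    rw [hxexp, sub_dotProduct, dotProduct_sub, dotProduct_sub, hs, hps, hsp]
    have : p i ⬝ᵥ p i = 1 := by simpa using hp i i
    rw [this]; ring
  have hxu1 : ∀ i, x i ⬝ᵥ u1 = p i ⬝ᵥ u1 := by
    intro i
    have hxexp : x i = p i - ∑ k ∈ I, c k i • q k := by rw [hxdef]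
    rw [hxexp, sub_dotProduct]
    have : (∑ k ∈ I, c k i • q k) ⬝ᵥ u1 = 0 := by
      rw [aux_sum_dot]
      refine Finset.sum_eq_zero fun k hk => ?_
      rw [smul_dotProduct, hqu1 k hk, smul_zero]
    rw [this, sub_zero]
  -- y1, y2 and the decomposition
  set y1 : Fin d → ℝ := ∑ i ∈ I, (p i ⬝ᵥ u1) • p i with hy1
  set y2 : Fin d → ℝ := ∑ k ∈ I, α k • w k with hy2
  have hpu2 : ∀ i, p i ⬝ᵥ u2 = ∑ k ∈ I, α k * c k i := by
    intro i
    rw [hu2, aux_dot_sum]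
    refine Finset.sum_congr rfl fun k _ => ?_
    rw [dotProduct_smul]
    simp [hc, smul_eq_mul]
  have hu2y2 : u2 - y2 = ∑ i ∈ I, (∑ k ∈ I, α k * c k i) • p i := by
    rw [hu2, hy2, ← Finset.sum_sub_distrib]
    have h1 : ∀ k ∈ I, α k • q k - α k • w k = ∑ i ∈ I, (α k * c k i) • p i := by
      intro k _
      have : α k • q k - α k • w k = α k • (∑ i ∈ I, c k i • p i) := by
        rw [← smul_sub]
        congr 1
        have hwe : w k = q k - ∑ i ∈ I, c k i • p i := by rw [hwdef]
        rw [hwe]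
        abel
      rw [this, Finset.smul_sum]
      refine Finset.sum_congr rfl fun i _ => ?_
      rw [smul_smul]
    rw [Finset.sum_congr rfl h1, Finset.sum_comm]
    refine Finset.sum_congr rfl fun i _ => ?_
    rw [Finset.sum_smul]
  have hDv : (((∑ i ∈ I, vecMulVec (p i) (p i)) - (∑ k ∈ I, vecMulVec (q k) (q k))) *ᵥ v)
      = y1 - y2 := by
    rw [Matrix.sub_mulVec, aux_proj_mulVec, aux_proj_mulVec]
    have hq2 : ∑ k ∈ I, (q k ⬝ᵥ v) • q k = u2 := by rw [hu2]
    have hp2 : ∑ i ∈ I, (p i ⬝ᵥ v) • p i = y1 + (u2 - y2) := by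
      rw [hu2y2, hy1, ← Finset.sum_add_distrib]
      refine Finset.sum_congr rfl fun i _ => ?_
      rw [← add_smul]
      congr 1
      have hv : v = u1 + u2 := by rw [hu1, sub_add_cancel]
      rw [hv, dotProduct_add, hpu2 i]
    rw [hp2, hq2]
    abel
  -- orthogonality of y1 and y2
  have hy1y2 : y1 ⬝ᵥ y2 = 0 := by
    rw [hy1, aux_sum_dot]
    refine Finset.sum_eq_zero fun i hi => ?_
    rw [smul_dotProduct, hy2, aux_dot_sum]
    have : ∀ k ∈ I, p i ⬝ᵥ (α k • w k) = 0 := by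
      intro k _
      rw [dotProduct_smul, hpw i hi k, smul_zero]
    rw [Finset.sum_eq_zero this, smul_zero]
  -- bounds
  have hy1le : y1 ⬝ᵥ y1 ≤ T * (u1 ⬝ᵥ u1) := by
    have hy1sq : y1 ⬝ᵥ y1 = ∑ i ∈ I, (p i ⬝ᵥ u1) ^ 2 := by
      rw [hy1, aux_orthsum hp I (fun i => p i ⬝ᵥ u1) (fun i => p i ⬝ᵥ u1)]
      simp [sq]
    rw [hy1sq, ← hT', Finset.sum_mul]
    refine Finset.sum_le_sum fun i hi => ?_
    have h1 := aux_cs (x i) u1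
    rw [hxi i hi, hxu1 i] at h1
    exact h1
  have hy2le : y2 ⬝ᵥ y2 ≤ T * (u2 ⬝ᵥ u2) := by
    have h := aux_sumvec_sq I α w
    have hα2 : ∑ k ∈ I, (α k) ^ 2 = u2 ⬝ᵥ u2 := by
      rw [hu2, aux_orthsum hq I α α]
      simp [sq]
    have hww : ∑ k ∈ I, w k ⬝ᵥ w k = T := by
      rw [hT]; exact Finset.sum_congr rfl hwk
    calc y2 ⬝ᵥ y2 ≤ (∑ k ∈ I, (α k) ^ 2) * (∑ k ∈ I, w k ⬝ᵥ w k) := by rw [hy2]; exact h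
      _ = T * (u2 ⬝ᵥ u2) := by rw [hα2, hww]; ring
  -- main quadratic bound
  set Dv : Fin d → ℝ :=
    (((∑ i ∈ I, vecMulVec (p i) (p i)) - (∑ k ∈ I, vecMulVec (q k) (q k))) *ᵥ v) with hDvdef
  have hmain : Dv ⬝ᵥ Dv ≤ (r : ℝ) * (4 * eps ^ 2 / δ ^ 2) * (v ⬝ᵥ v) := by
    have e1 : Dv ⬝ᵥ Dv = y1 ⬝ᵥ y1 + y2 ⬝ᵥ y2 := by
      rw [hDv, sub_dotProduct, dotProduct_sub, dotProduct_sub,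
        dotProduct_comm y2 y1, hy1y2]
      ring
    have e2 : y1 ⬝ᵥ y1 + y2 ⬝ᵥ y2 ≤ T * (v ⬝ᵥ v) := by
      rw [hvv, mul_add]
      exact add_le_add hy1le hy2le
    calc Dv ⬝ᵥ Dv ≤ T * (v ⬝ᵥ v) := by rw [e1]; exact e2
      _ ≤ (r : ℝ) * (4 * eps ^ 2 / δ ^ 2) * (v ⬝ᵥ v) :=
          mul_le_mul_of_nonneg_right hTbound (aux_dsn v)
  -- conclude
  have hCnn : (0 : ℝ) ≤ 2 * Real.sqrt r * eps / δ := by positivity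
  have hCsq : (2 * Real.sqrt r * eps / δ) ^ 2 = (r : ℝ) * (4 * eps ^ 2 / δ ^ 2) := by
    rw [div_pow, mul_pow, mul_pow, Real.sq_sqrt (by positivity : (0 : ℝ) ≤ (r : ℝ))]
    ring
  show Real.sqrt (Dv ⬝ᵥ Dv) ≤ (2 * Real.sqrt r * eps / δ) * Real.sqrt (v ⬝ᵥ v)
  calc Real.sqrt (Dv ⬝ᵥ Dv)
      ≤ Real.sqrt ((2 * Real.sqrt r * eps / δ) ^ 2 * (v ⬝ᵥ v)) := by
        apply Real.sqrt_le_sqrt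
        rw [hCsq]
        exact hmain
    _ = (2 * Real.sqrt r * eps / δ) * Real.sqrt (v ⬝ᵥ v) := by
        rw [Real.sqrt_mul (sq_nonneg _), Real.sqrt_sq hCnn]
end

section
/- Let P and Q be orthogonal projectors on R^d and let x be a unit eigenvector of P+Q with eigenvalue λ ∈ (0,1) ∪ (1,2). Then (Px, x − Px) is an orthogonal pair of nonzero vectors whose span contains both x and (P−Q)x. -/
open RealInnerProductSpace

theorem stmt_18 (d : ℕ) (P Q : EuclideanSpace ℝ (Fin d) →ₗ[ℝ] EuclideanSpace ℝ (Fin d))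
    (hPsymm : ∀ x y, ⟪P x, y⟫ = ⟪x, P y⟫) (hPidem : P ∘ₗ P = P)
    (hQsymm : ∀ x y, ⟪Q x, y⟫ = ⟪x, Q y⟫) (hQidem : Q ∘ₗ Q = Q)
    (x : EuclideanSpace ℝ (Fin d)) (hx : ‖x‖ = 1)
    (lam : ℝ) (hlam0 : 0 < lam) (hlam2 : lam < 2) (hlam1 : lam ≠ 1)
    (h : (P + Q) x = lam • x) :
    ⟪P x, x - P x⟫ = 0 ∧ P x ≠ 0 ∧ x - P x ≠ 0 ∧
      x ∈ Submodule.span ℝ ({P x, x - P x} : Set (EuclideanSpace ℝ (Fin d))) ∧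
      (P - Q) x ∈ Submodule.span ℝ ({P x, x - P x} : Set (EuclideanSpace ℝ (Fin d))) := by
  have hx0 : x ≠ 0 := by
    intro h0; rw [h0, norm_zero] at hx; norm_num at hx
  have hPP : ∀ y, P (P y) = P y := fun y => congrFun (congrArg (fun f => f.toFun) hPidem) y
  have hQQ : ∀ y, Q (Q y) = Q y := fun y => congrFun (congrArg (fun f => f.toFun) hQidem) y
  have hsum : P x + Q x = lam • x := by simpa using h
  have horth : ⟪P x, x - P x⟫ = 0 := by
    have he : ⟪P x, P x⟫ = ⟪P x, x⟫ := by
      calc ⟪P x, P x⟫ = ⟪x, P (P x)⟫ := hPsymm x (P x)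
        _ = ⟪x, P x⟫ := by rw [hPP]
        _ = ⟪P x, x⟫ := (real_inner_comm x (P x)).symm
    rw [inner_sub_right, he, sub_self]
  have hQx : Q x = lam • x - P x := by rw [← hsum]; abel
  have hPne : P x ≠ 0 := by
    intro hP0
    have hQxe : Q x = lam • x := by rw [hQx, hP0]; abel
    have : lam • (lam • x) = lam • x := by
      calc lam • (lam • x) = Q (lam • x) := by rw [map_smul, hQxe]
        _ = Q (Q x) := by rw [hQxe]
        _ = Q x := hQQ x
        _ = lam • x := hQxe
    rw [smul_smul] at this
    have h2 : (lam * lam - lam) • x = 0 := by rw [sub_smul, this, sub_self]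
    rcases smul_eq_zero.mp h2 with hc | hc
    · have : lam * (lam - 1) = 0 := by ring_nf; linarith [hc]
      rcases mul_eq_zero.mp this with h' | h'
      · exact absurd h' (ne_of_gt hlam0)
      · exact hlam1 (by linarith)
    · exact hx0 hc
  have hsne : x - P x ≠ 0 := by
    intro hs0
    have hPxx : P x = x := by
      have := sub_eq_zero.mp hs0; exact this.symm
    have hQxe : Q x = (lam - 1) • x := by rw [hQx, hPxx, sub_smul, one_smul]
    have : (lam - 1) • ((lam - 1) • x) = (lam - 1) • x := by
      calc (lam - 1) • ((lam - 1) • x) = Q ((lam - 1) • x) := by rw [map_smul, hQxe]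
        _ = Q (Q x) := by rw [hQxe]
        _ = Q x := hQQ x
        _ = (lam - 1) • x := hQxe
    rw [smul_smul] at this
    have h2 : ((lam - 1) * (lam - 1) - (lam - 1)) • x = 0 := by
      rw [sub_smul, this, sub_self]
    rcases smul_eq_zero.mp h2 with hc | hc
    · have : (lam - 1) * (lam - 2) = 0 := by ring_nf; ring_nf at hc; linarith
      rcases mul_eq_zero.mp this with h' | h'
      · exact hlam1 (by linarith)
      · linarith [h']
    · exact hx0 hc
  have hmem1 : P x ∈ Submodule.span ℝ ({P x, x - P x} : Set (EuclideanSpace ℝ (Fin d))) :=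
    Submodule.subset_span (by left; rfl)
  have hmem2 : x - P x ∈ Submodule.span ℝ ({P x, x - P x} : Set (EuclideanSpace ℝ (Fin d))) :=
    Submodule.subset_span (by right; rfl)
  have hxmem : x ∈ Submodule.span ℝ ({P x, x - P x} : Set (EuclideanSpace ℝ (Fin d))) := by
    have h4 := Submodule.add_mem _ hmem1 hmem2
    have h3 : P x + (x - P x) = x := by abel
    rwa [h3] at h4
  refine ⟨horth, hPne, hsne, hxmem, ?_⟩
  have hPQ : (P - Q) x = (2 - lam) • P x - lam • (x - P x) := by
    have : (P - Q) x = P x - Q x := by simp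
    rw [this, hQx]
    module
  rw [hPQ]
  exact Submodule.sub_mem _ (Submodule.smul_mem _ _ hmem1) (Submodule.smul_mem _ _ hmem2)
end
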